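/- Let k ≥ 1 and let H, H' be hypergraphs. Then H and H' are homomorphism indistinguishable over the class GHW_k of all hypergraphs of generalised hypertree width at most k if and only if their incidence graphs I_H and I_{H'} are homomorphism indistinguishable over the class IGHW_k of all incidence graphs of generalised hypertree width at most k. -/

import Mathlib

set_option autoImplicit false

noncomputable section

/-! ### Incidence graphs -/

/-- An incidence graph: finite sets of red nodes and blue nodes (realised as two
disjoint finite types), edges from blue nodes to red nodes, every red node adjacent
to at least one blue node. -/
structure IncGraph where
  R : Type
  B : Type
  [finR : Finite R]
  [finB : Finite B]
  E : B → R → Prop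
  covered : ∀ v : R, ∃ e : B, E e v

attribute [instance] IncGraph.finR IncGraph.finB

/-- The neighbourhood of a blue node. -/
def IncGraph.nbhd (I : IncGraph) (e : I.B) : Set I.R := {v | I.E e v}

/-- Homomorphisms between incidence graphs. -/
def IncHom (J I : IncGraph) : Type :=
  {h : (J.R → I.R) × (J.B → I.B) // ∀ e v, J.E e v → I.E (h.2 e) (h.1 v)}

/-- The number of homomorphisms between incidence graphs. -/
def homCount (J I : IncGraph) : ℕ := Nat.card (IncHom J I)

/-- Homomorphism indistinguishability over a class of incidence graphs. -/
def HomIndist (C : Set IncGraph) (I I' : IncGraph) : Prop :=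
  ∀ J ∈ C, homCount J I = homCount J I'

/-- Isomorphism of incidence graphs. -/
def IncIso (I I' : IncGraph) : Prop :=
  ∃ (πR : I.R ≃ I'.R) (πB : I.B ≃ I'.B), ∀ e v, I.E e v ↔ I'.E (πB e) (πR v)

/-! ### Hypergraphs -/

structure Hypergraph' where
  V : Type
  Edge : Type
  [finV : Finite V]
  [finE : Finite Edge]
  f : Edge → Set V
  covered : ∀ v : V, ∃ e : Edge, v ∈ f e

attribute [instance] Hypergraph'.finV Hypergraph'.finE

/-- A hypergraph is simple if its incidence function is injective. -/
def Hypergraph'.Simple (H : Hypergraph') : Prop := Function.Injective H.f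

/-- The incidence graph of a hypergraph. -/
def Hypergraph'.inc (H : Hypergraph') : IncGraph where
  R := H.V
  B := H.Edge
  E := fun e v => v ∈ H.f e
  covered := H.covered

/-- Homomorphisms between hypergraphs. -/
def HypHom (F H : Hypergraph') : Type :=
  {h : (F.V → H.V) × (F.Edge → H.Edge) // ∀ e, H.f (h.2 e) = h.1 '' F.f e}

/-- The number of homomorphisms between hypergraphs. -/
def hhomCount (F H : Hypergraph') : ℕ := Nat.card (HypHom F H)

/-- Homomorphism indistinguishability over a class of hypergraphs. -/
def HypHomIndist (C : Set Hypergraph') (H H' : Hypergraph') : Prop :=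
  ∀ F ∈ C, hhomCount F H = hhomCount F H'

/-! ### Hypertree decompositions -/

/-- A complete generalised hypertree decomposition of an incidence graph. -/
structure GHD (I : IncGraph) where
  T : Type
  [finT : Finite T]
  tr : SimpleGraph T
  isTree : tr.IsTree
  Bag : T → Set I.R
  Cover : T → Set I.B
  complete : ∀ e : I.B, ∃ t, I.nbhd e ⊆ Bag t ∧ e ∈ Cover t
  connR : ∀ v : I.R, (tr.induce {t | v ∈ Bag t}).Connected
  covering : ∀ t, Bag t ⊆ ⋃ e ∈ Cover t, I.nbhd e

attribute [instance] GHD.finT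

/-- The decomposition has width at most `k`. -/
def GHD.widthLe {I : IncGraph} (D : GHD I) (k : ℕ) : Prop :=
  ∀ t, (D.Cover t).ncard ≤ k

/-- An entangled hypertree decomposition. -/
structure EHD (I : IncGraph) extends GHD I where
  precise : ∀ t, (⋃ e ∈ Cover t, I.nbhd e) = Bag t
  connB : ∀ e : I.B, (tr.induce {t | e ∈ Cover t}).Connected

/-- Incidence graphs of generalised hypertree width at most `k`. -/
def IGHW (k : ℕ) : Set IncGraph := {I | ∃ D : GHD I, D.widthLe k}

/-- Incidence graphs of entangled hypertree width at most `k`. -/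
def IEHW (k : ℕ) : Set IncGraph := {I | ∃ D : EHD I, D.toGHD.widthLe k}

/-- Hypergraphs of generalised hypertree width at most `k`. -/
def GHWclass (k : ℕ) : Set Hypergraph' := {H | H.inc ∈ IGHW k}

/-- Simple hypergraphs of generalised hypertree width at most `k`. -/
def SGHWclass (k : ℕ) : Set Hypergraph' := {H | H.Simple ∧ H.inc ∈ IGHW k}

/-- Adding `n` fresh blue nodes whose neighbourhood is exactly `s`. -/
def IncGraph.addBlue (J : IncGraph) (s : Set J.R) (n : ℕ) : IncGraph where
  R := J.R
  B := J.B ⊕ Fin n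
  E := fun e v => Sum.elim (fun e₁ => J.E e₁ v) (fun _ => v ∈ s) e
  covered := fun v => by
    obtain ⟨e, he⟩ := J.covered v
    exact ⟨Sum.inl e, he⟩

/-! ### Guard functions -/

/-- A guard function: a partial map from red-variable indices to `[k]`
with finite domain. -/
structure GuardF (k : ℕ) where
  f : ℕ → Option (Fin k)
  fin : {i | (f i).isSome}.Finite

namespace GuardF

variable {k : ℕ}

/-- The domain of a guard function. -/
def dom (g : GuardF k) : Finset ℕ := g.fin.toFinset

open Classical in
/-- The image of a guard function. -/
def img (g : GuardF k) : Finset (Fin k) :=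
  Finset.univ.filter fun j => ∃ i, g.f i = some j

theorem mem_dom {g : GuardF k} {i : ℕ} : i ∈ g.dom ↔ (g.f i).isSome := by
  simp [dom, Set.Finite.mem_toFinset]

theorem mem_img {g : GuardF k} {j : Fin k} : j ∈ g.img ↔ ∃ i, g.f i = some j := by
  classical
  simp [img]

/-- Union of two guard functions (the first takes precedence). -/
def union (g₁ g₂ : GuardF k) : GuardF k where
  f := fun i => (g₁.f i).or (g₂.f i)
  fin := by
    apply (g₁.fin.union g₂.fin).subset
    intro i hi
    simp only [Set.mem_setOf_eq, Option.isSome_or, Bool.or_eq_true] at hi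
    exact hi

/-- Removing a set of indices from the domain of a guard function. -/
def remove (g : GuardF k) (s : Finset ℕ) : GuardF k where
  f := fun i => if i ∈ s then none else g.f i
  fin := by
    apply g.fin.subset
    intro i hi
    simp only [Set.mem_setOf_eq] at hi ⊢
    by_cases h : i ∈ s
    · simp [h] at hi
    · simpa [h] using hi

/-- Two guard functions are compatible if they agree on the intersection
of their domains. -/
def Compatible (g₁ g₂ : GuardF k) : Prop :=
  ∀ i j₁ j₂, g₁.f i = some j₁ → g₂.f i = some j₂ → j₁ = j₂

/-- `f` is a transition for `g`. -/
def IsTransition (g f : GuardF k) : Prop :=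
  f.dom.Nonempty ∧ (∀ i, (f.f i).isSome → (g.f i).isSome) ∧
    ∀ i j, g.f i = some j → j ∈ f.img → (f.f i).isSome

/-- `g ⊆ g'` for guard functions. -/
def le (g g' : GuardF k) : Prop := ∀ i j, g.f i = some j → g'.f i = some j

end GuardF

/-! ### The logic GC^k -/

/-- Raw syntax of the two-sorted counting logic with guards. Quantifiers carry
the guard function used to guard the quantified formula. -/
inductive Fml (k : ℕ) : Type where
  | top : Fml k
  | E (j : Fin k) (i : ℕ) : Fml k
  | beq (j j' : Fin k) : Fml k
  | req (i i' : ℕ) : Fml k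
  | not (ψ : Fml k) : Fml k
  | and (ψ₁ ψ₂ : Fml k) : Fml k
  | exR (n : ℕ) (s : Finset ℕ) (g : GuardF k) (ψ : Fml k) : Fml k
  | exB (n : ℕ) (s : Finset (Fin k)) (g : GuardF k) (ψ : Fml k) : Fml k

/-- Indices of free red variables of a formula.  For the quantified formulas the
quantified body is `(α_g ∧ ψ)`. -/
def freeR {k : ℕ} : Fml k → Finset ℕ
  | .top => ∅
  | .E _ i => {i}
  | .beq _ _ => ∅
  | .req i i' => {i, i'}
  | .not ψ => freeR ψ
  | .and ψ₁ ψ₂ => freeR ψ₁ ∪ freeR ψ₂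
  | .exR _ s g ψ => (g.dom ∪ freeR ψ) \ s
  | .exB _ _ g ψ => g.dom ∪ freeR ψ

/-- Indices of free blue variables of a formula. -/
def freeB {k : ℕ} : Fml k → Finset (Fin k)
  | .top => ∅
  | .E j _ => {j}
  | .beq j j' => {j, j'}
  | .req _ _ => ∅
  | .not ψ => freeB ψ
  | .and ψ₁ ψ₂ => freeB ψ₁ ∪ freeB ψ₂
  | .exR _ _ g ψ => g.img ∪ freeB ψ
  | .exB _ s g ψ => (g.img ∪ freeB ψ) \ s

/-- Updating a red assignment on the variables in `s`. -/
def updR {R : Type} (βR : ℕ → R) (s : Finset ℕ) (a : ↥s → R) : ℕ → R :=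
  fun i => if h : i ∈ s then a ⟨i, h⟩ else βR i

/-- Updating a blue assignment on the variables in `s`. -/
def updB {k : ℕ} {B : Type} (βB : Fin k → B) (s : Finset (Fin k)) (a : ↥s → B) : Fin k → B :=
  fun j => if h : j ∈ s then a ⟨j, h⟩ else βB j

/-- Satisfaction of the guard formula `α_g` in an interpretation. -/
def GuardSat {k : ℕ} (I : IncGraph) (βB : Fin k → I.B) (βR : ℕ → I.R) (g : GuardF k) : Prop :=
  ∀ i j, g.f i = some j → I.E (βB j) (βR i)

/-- Satisfaction of a formula in an interpretation `(I, β)`. -/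
def FmlSat {k : ℕ} (I : IncGraph) : Fml k → (Fin k → I.B) → (ℕ → I.R) → Prop
  | Fml.top, _, _ => True
  | Fml.E j i, βB, βR => I.E (βB j) (βR i)
  | Fml.beq j j', βB, _ => βB j = βB j'
  | Fml.req i i', _, βR => βR i = βR i'
  | Fml.not ψ, βB, βR => ¬ FmlSat I ψ βB βR
  | Fml.and ψ₁ ψ₂, βB, βR => FmlSat I ψ₁ βB βR ∧ FmlSat I ψ₂ βB βR
  | Fml.exR n s g ψ, βB, βR =>
      n ≤ Nat.card {a : ↥s → I.R //
        GuardSat I βB (updR βR s a) g ∧ FmlSat I ψ βB (updR βR s a)}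
  | Fml.exB n s g ψ, βB, βR =>
      n ≤ Nat.card {a : ↥s → I.B //
        GuardSat I (updB βB s a) βR g ∧ FmlSat I ψ (updB βB s a) βR}

/-- The formulas of the logic `GC^k`. -/
inductive IsGC (k : ℕ) : Fml k → Prop
  | top : IsGC k Fml.top
  | E (j : Fin k) (i : ℕ) : IsGC k (Fml.E j i)
  | beq (j j' : Fin k) : IsGC k (Fml.beq j j')
  | req (i i' : ℕ) : IsGC k (Fml.req i i')
  | not {ψ : Fml k} : IsGC k ψ → IsGC k ψ.not
  | and {ψ₁ ψ₂ : Fml k} : IsGC k ψ₁ → IsGC k ψ₂ → IsGC k (ψ₁.and ψ₂)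
  | exR {ψ : Fml k} (n : ℕ) (s : Finset ℕ) (g : GuardF k) :
      IsGC k ψ → g.dom = freeR ψ → 1 ≤ n → s.Nonempty → s ⊆ g.dom →
      IsGC k (Fml.exR n s g ψ)
  | exB {ψ : Fml k} (n : ℕ) (s : Finset (Fin k)) (g : GuardF k) :
      IsGC k ψ → g.dom = freeR ψ → 1 ≤ n → s.Nonempty → s ⊆ g.img ∪ freeB ψ →
      IsGC k (Fml.exB n s g ψ)

/-- The normal form `NGC^k`: `NGC k g ψ` expresses that `(α_g ∧ ψ)` is a formula
of the fragment `NGC^k`. -/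
inductive NGC (k : ℕ) : GuardF k → Fml k → Prop
  | E {g : GuardF k} (j : Fin k) (i : ℕ) : g.dom = {i} → NGC k g (Fml.E j i)
  | beq {g : GuardF k} (j j' : Fin k) : g.dom = ∅ → NGC k g (Fml.beq j j')
  | req {g : GuardF k} (i i' : ℕ) : g.dom = {i, i'} → NGC k g (Fml.req i i')
  | not {g : GuardF k} {ψ : Fml k} : NGC k g ψ → NGC k g ψ.not
  | and {g₁ g₂ : GuardF k} {ψ₁ ψ₂ : Fml k} :
      NGC k g₁ ψ₁ → NGC k g₂ ψ₂ → GuardF.Compatible g₁ g₂ →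
      NGC k (g₁.union g₂) (ψ₁.and ψ₂)
  | exR {g : GuardF k} {ψ : Fml k} (n : ℕ) (s : Finset ℕ) :
      NGC k g ψ → 1 ≤ n → s.Nonempty → s ⊆ g.dom →
      NGC k (g.remove s) (Fml.exR n s g ψ)
  | exB {g g' : GuardF k} {ψ : Fml k} (n : ℕ) (s : Finset (Fin k)) :
      NGC k g ψ → 1 ≤ n → s.Nonempty → s ⊆ g.img ∪ freeB ψ →
      g'.dom = g.dom →
      (∀ i ∈ g.dom, ∃ j, g'.f i = some j ∧ (g.f i = some j ∨ j ∈ s ∨ j ∉ g.img)) →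
      NGC k g' (Fml.exB n s g ψ)

/-- Indistinguishability of two incidence graphs by sentences of `GC^k`. -/
def GCEquiv (k : ℕ) (I I' : IncGraph) : Prop :=
  ∀ φ : Fml k, IsGC k φ → freeR φ = ∅ → freeB φ = ∅ →
    ((∀ βB βR, FmlSat I φ βB βR) ↔ (∀ βB βR, FmlSat I' φ βB βR))

/-! ### k-labeled incidence graphs -/

/-- A `k`-labeled incidence graph. -/
structure KLI (k : ℕ) where
  I : IncGraph
  r : ℕ → Option I.R
  b : Fin k → Option I.B
  g : GuardF k
  fin_r : {i | (r i).isSome}.Finite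

namespace KLI

variable {k : ℕ}

/-- The set of red labels used. -/
def domR (L : KLI k) : Finset ℕ := L.fin_r.toFinset

/-- The set of blue labels used. -/
def domB (L : KLI k) : Finset (Fin k) := Finset.univ.filter fun j => (L.b j).isSome

/-- `L` has real guards with respect to the partial map `f`. -/
def realGuardsWrt (L : KLI k) (f : ℕ → Option (Fin k)) : Prop :=
  ∀ i j, f i = some j → ∃ v e, L.r i = some v ∧ L.b j = some e ∧ L.I.E e v

/-- `L` has real guards. -/
def realGuards (L : KLI k) : Prop := L.realGuardsWrt L.g.f

/-- Removing red labels. -/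
def removeR (L : KLI k) (X : Finset ℕ) : KLI k where
  I := L.I
  r := fun i => if i ∈ X then none else L.r i
  b := L.b
  g := L.g.remove X
  fin_r := by
    apply L.fin_r.subset
    intro i hi
    simp only [Set.mem_setOf_eq] at hi ⊢
    by_cases h : i ∈ X
    · simp [h] at hi
    · simpa [h] using hi

/-- Removing blue labels. -/
def removeB (L : KLI k) (X : Finset (Fin k)) : KLI k where
  I := L.I
  r := L.r
  b := fun j => if j ∈ X then none else L.b j
  g := L.g
  fin_r := L.fin_r

/-- Moving the red labels in `X` onto the nodes given by `a`. -/
def reseatR (L : KLI k) (X : Finset ℕ) (a : ↥X → L.I.R) : KLI k where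
  I := L.I
  r := fun i => if h : i ∈ X then some (a ⟨i, h⟩) else L.r i
  b := L.b
  g := L.g
  fin_r := by
    apply (L.fin_r.union X.finite_toSet).subset
    intro i hi
    simp only [Set.mem_setOf_eq] at hi
    by_cases h : i ∈ X
    · exact Or.inr (by simpa using h)
    · exact Or.inl (by simpa [h] using hi)

/-- Moving the blue labels in `X` onto the nodes given by `a`. -/
def reseatB (L : KLI k) (X : Finset (Fin k)) (a : ↥X → L.I.B) : KLI k where
  I := L.I
  r := L.r
  b := fun j => if h : j ∈ X then some (a ⟨j, h⟩) else L.b j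
  g := L.g
  fin_r := L.fin_r

/-- The identifications of red nodes when glueing. -/
def glueRelR (L₁ L₂ : KLI k) : (L₁.I.R ⊕ L₂.I.R) → (L₁.I.R ⊕ L₂.I.R) → Prop :=
  fun x y => ∃ i v₁ v₂, L₁.r i = some v₁ ∧ L₂.r i = some v₂ ∧ x = Sum.inl v₁ ∧ y = Sum.inr v₂

/-- The identifications of blue nodes when glueing. -/
def glueRelB (L₁ L₂ : KLI k) : (L₁.I.B ⊕ L₂.I.B) → (L₁.I.B ⊕ L₂.I.B) → Prop :=
  fun x y => ∃ j e₁ e₂, L₁.b j = some e₁ ∧ L₂.b j = some e₂ ∧ x = Sum.inl e₁ ∧ y = Sum.inr e₂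

/-- The incidence graph underlying the glueing of two labeled incidence graphs. -/
def glueIG (L₁ L₂ : KLI k) : IncGraph where
  R := Quot (glueRelR L₁ L₂)
  B := Quot (glueRelB L₁ L₂)
  finR := Finite.of_surjective (Quot.mk (glueRelR L₁ L₂))
    (fun q => Quot.inductionOn q fun a => ⟨a, rfl⟩)
  finB := Finite.of_surjective (Quot.mk (glueRelB L₁ L₂))
    (fun q => Quot.inductionOn q fun a => ⟨a, rfl⟩)
  E := fun e v =>
    (∃ e₁ v₁, L₁.I.E e₁ v₁ ∧ e = Quot.mk (glueRelB L₁ L₂) (Sum.inl e₁) ∧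
      v = Quot.mk (glueRelR L₁ L₂) (Sum.inl v₁)) ∨
    (∃ e₂ v₂, L₂.I.E e₂ v₂ ∧ e = Quot.mk (glueRelB L₁ L₂) (Sum.inr e₂) ∧
      v = Quot.mk (glueRelR L₁ L₂) (Sum.inr v₂))
  covered := by
    intro v
    induction v using Quot.ind with
    | _ x =>
      cases x with
      | inl v₁ =>
        obtain ⟨e₁, he⟩ := L₁.I.covered v₁
        exact ⟨Quot.mk (glueRelB L₁ L₂) (Sum.inl e₁), Or.inl ⟨e₁, v₁, he, rfl, rfl⟩⟩
      | inr v₂ =>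
        obtain ⟨e₂, he⟩ := L₂.I.covered v₂
        exact ⟨Quot.mk (glueRelB L₁ L₂) (Sum.inr e₂), Or.inr ⟨e₂, v₂, he, rfl, rfl⟩⟩

/-- Glueing two `k`-labeled incidence graphs. -/
def glue (L₁ L₂ : KLI k) : KLI k where
  I := glueIG L₁ L₂
  r := fun i =>
    match L₁.r i with
    | some v => some (Quot.mk (glueRelR L₁ L₂) (Sum.inl v))
    | none => (L₂.r i).map fun v => Quot.mk (glueRelR L₁ L₂) (Sum.inr v)
  b := fun j =>
    match L₁.b j with
    | some e => some (Quot.mk (glueRelB L₁ L₂) (Sum.inl e))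
    | none => (L₂.b j).map fun e => Quot.mk (glueRelB L₁ L₂) (Sum.inr e)
  g := L₁.g.union L₂.g
  fin_r := by
    apply (L₁.fin_r.union L₂.fin_r).subset
    intro i hi
    simp only [Set.mem_setOf_eq] at hi
    cases h₁ : L₁.r i with
    | some v => exact Or.inl (by simp [h₁])
    | none =>
      right
      rw [h₁] at hi
      cases h₂ : L₂.r i <;> simp_all <;> exact absurd hi Bool.false_ne_true

/-- The `k`-labeled incidence graph `L^f` defined by a guard function `f`. -/
def guardKLI (f : GuardF k) : KLI k where
  I := { R := {i : ℕ // i ∈ f.dom}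
         B := {j : Fin k // j ∈ f.img}
         E := fun j i => f.f i.1 = some j.1
         covered := by
           rintro ⟨i, hi⟩
           have hs : (f.f i).isSome := GuardF.mem_dom.mp hi
           have hj : (f.f i).get hs ∈ f.img :=
             GuardF.mem_img.mpr ⟨i, (Option.some_get hs).symm⟩
           exact ⟨⟨(f.f i).get hs, hj⟩, (Option.some_get hs).symm⟩ }
  r := fun i => if h : i ∈ f.dom then some ⟨i, h⟩ else none
  b := fun j => if h : j ∈ f.img then some ⟨j, h⟩ else none
  g := f
  fin_r := by
    apply f.dom.finite_toSet.subset
    intro i hi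
    simp only [Set.mem_setOf_eq] at hi
    by_cases h : i ∈ f.dom
    · simpa using h
    · simp [h] at hi

/-- Applying a transition `f` to `L`. -/
def applyTransition (L : KLI k) (f : GuardF k) : KLI k :=
  (guardKLI f).glue (L.removeB (L.g.img ∩ f.img ∩ L.domB))

end KLI

/-- The class `GLI^k` of guarded `k`-labeled incidence graphs. -/
inductive GLI (k : ℕ) : KLI k → Prop
  | base (L : KLI k) :
      (∀ v : L.I.R, ∃ i, L.r i = some v) →
      (∀ e : L.I.B, ∃ j, L.b j = some e) →
      (∀ i, (L.r i).isSome ↔ (L.g.f i).isSome) →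
      L.realGuards → GLI k L
  | removeR (L : KLI k) (X : Finset ℕ) :
      GLI k L → (∀ i ∈ X, (L.r i).isSome) → GLI k (L.removeR X)
  | removeB (L : KLI k) (X : Finset (Fin k)) :
      GLI k L → (∀ j ∈ X, (L.b j).isSome ∧ j ∉ L.g.img) → GLI k (L.removeB X)
  | trans (L : KLI k) (f : GuardF k) :
      GLI k L → L.g.IsTransition f → GLI k (L.applyTransition f)
  | glue (L L' : KLI k) :
      GLI k L → GLI k L' → GuardF.Compatible L.g L'.g → GLI k (L.glue L')

/-- Two `k`-labeled incidence graphs are compatible. -/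
def KCompatible {k : ℕ} (L L' : KLI k) : Prop :=
  (∀ i, (L.r i).isSome ↔ (L'.r i).isSome) ∧
  (∀ j, (L.b j).isSome ↔ (L'.b j).isSome) ∧ L.g.f = L'.g.f

/-- Homomorphisms between `k`-labeled incidence graphs: they respect the labels
and ignore the guard functions. -/
def KHom {k : ℕ} (L L' : KLI k) : Type :=
  {h : (L.I.R → L'.I.R) × (L.I.B → L'.I.B) //
    (∀ e v, L.I.E e v → L'.I.E (h.2 e) (h.1 v)) ∧
    (∀ i v, L.r i = some v → L'.r i = some (h.1 v)) ∧
    (∀ j e, L.b j = some e → L'.b j = some (h.2 e))}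

/-- The number of homomorphisms between `k`-labeled incidence graphs. -/
def khom {k : ℕ} (L L' : KLI k) : ℕ := Nat.card (KHom L L')

/-! ### Quantum incidence graphs -/

/-- A formal linear combination of `k`-labeled incidence graphs, given as a list
of coefficient/component pairs. -/
abbrev QIG (k : ℕ) := List (ℝ × KLI k)

/-- `Q` is a `k`-labeled quantum incidence graph: it is a nonempty formal linear
combination of pairwise compatible `k`-labeled incidence graphs. -/
def IsQuantum {k : ℕ} (Q : QIG k) : Prop :=
  Q ≠ [] ∧ ∀ p ∈ Q, ∀ q ∈ Q, KCompatible p.2 q.2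

/-- Homomorphism count from a quantum incidence graph. -/
def qhom {k : ℕ} (Q : QIG k) (L : KLI k) : ℝ :=
  (Q.map fun p => p.1 * (khom p.2 L : ℝ)).sum

/-- Glueing of quantum incidence graphs. -/
def qglue {k : ℕ} (Q Q' : QIG k) : QIG k :=
  Q.flatMap fun p => Q'.map fun q => (p.1 * q.1, p.2.glue q.2)

/-- Componentwise removal of red labels. -/
def qremoveR {k : ℕ} (Q : QIG k) (X : Finset ℕ) : QIG k :=
  Q.map fun p => (p.1, p.2.removeR X)

/-- Componentwise removal of blue labels. -/
def qremoveB {k : ℕ} (Q : QIG k) (X : Finset (Fin k)) : QIG k :=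
  Q.map fun p => (p.1, p.2.removeB X)

/-- Componentwise application of a transition. -/
def qapplyTransition {k : ℕ} (Q : QIG k) (f : GuardF k) : QIG k :=
  Q.map fun p => (p.1, p.2.applyTransition f)

/-- Guarded quantum incidence graphs: all components belong to `GLI^k`. -/
def IsQGLI {k : ℕ} (Q : QIG k) : Prop := IsQuantum Q ∧ ∀ p ∈ Q, GLI k p.2

end



noncomputable section Statement4Proof
set_option linter.unusedVariables false
open Classical

open Classical

namespace St4

/-- Hypergraph' associated to an incidence graph. -/
def HofI (I : IncGraph) : Hypergraph' where
  V := I.R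
  Edge := I.B
  f := fun e => {v | I.E e v}
  covered := I.covered

theorem HofI_inc (I : IncGraph) : (HofI I).inc = I := rfl

/-- Padding: add `p e` fresh pendant vertices to each edge `e`. -/
def PadH (G : Hypergraph') (p : G.Edge → ℕ) : Hypergraph' where
  V := G.V ⊕ (Σ e : G.Edge, Fin (p e))
  Edge := G.Edge
  f := fun e => (Sum.inl '' G.f e) ∪ (Sum.inr '' {x : Σ e' : G.Edge, Fin (p e') | x.1 = e})
  covered := by
    rintro (v | x)
    · obtain ⟨e, he⟩ := G.covered v; exact ⟨e, Or.inl ⟨v, he, rfl⟩⟩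
    · exact ⟨x.1, Or.inr ⟨x, rfl, rfl⟩⟩

/-- Quotient hypergraph. -/
def QuotH (G : Hypergraph') (π : Setoid G.V) : Hypergraph' where
  V := Quotient π
  Edge := G.Edge
  f := fun e => Quotient.mk π '' G.f e
  covered := by
    intro v
    induction v using Quotient.ind with
    | _ x =>
      obtain ⟨e, he⟩ := G.covered x
      exact ⟨e, ⟨x, he, rfl⟩⟩

/-- Pairs related by `π` lying in a common edge. -/
def edgeRel (G : Hypergraph') (π : Setoid G.V) : G.V → G.V → Prop :=
  fun x y => π x y ∧ ∃ e, x ∈ G.f e ∧ y ∈ G.f e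

/-- `π` is generated by within-edge identifications. -/
def EdgeGen (G : Hypergraph') (π : Setoid G.V) : Prop :=
  ∀ x y, π x y → Relation.EqvGen (edgeRel G π) x y

lemma eqvGen_le {G : Hypergraph'} {π : Setoid G.V} {x y : G.V}
    (h : Relation.EqvGen (edgeRel G π) x y) : π x y := by
  induction h with
  | rel a b h => exact h.1
  | refl a => exact π.refl a
  | symm a b _ ih => exact π.symm ih
  | trans a b c _ _ ih1 ih2 => exact π.trans ih1 ih2

/-- closure of a setoid to an edge-generated one -/
def clS (G : Hypergraph') (s : Setoid G.V) : Setoid G.V :=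
  Relation.EqvGen.setoid (edgeRel G s)

lemma clS_le {G : Hypergraph'} {s : Setoid G.V} {x y : G.V} (h : clS G s x y) : s x y := by
  have h' : Relation.EqvGen (edgeRel G s) x y := h
  clear h
  induction h' with
  | rel a b h => exact h.1
  | refl a => exact s.refl a
  | symm a b _ ih => exact s.symm ih
  | trans a b c _ _ ih1 ih2 => exact s.trans ih1 ih2

lemma edgeGen_clS (G : Hypergraph') (s : Setoid G.V) : EdgeGen G (clS G s) := by
  intro x y h
  have h' : Relation.EqvGen (edgeRel G s) x y := h
  clear h
  induction h' with
  | rel a b h =>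
    exact Relation.EqvGen.rel a b ⟨Relation.EqvGen.rel a b h, h.2⟩
  | refl a => exact Relation.EqvGen.refl a
  | symm a b _ ih => exact Relation.EqvGen.symm _ _ ih
  | trans a b c _ _ ih1 ih2 => exact Relation.EqvGen.trans _ _ _ ih1 ih2

/-- the discrete setoid -/
def botS (V : Type) : Setoid V := ⟨Eq, ⟨fun _ => rfl, fun h => h.symm, fun h h' => h.trans h'⟩⟩

lemma edgeGen_botS (G : Hypergraph') : EdgeGen G (botS G.V) := by
  intro x y h
  cases h
  exact Relation.EqvGen.refl x

lemma eq_botS_of_discrete {V : Type} {π : Setoid V} (h : ∀ x y, π x y → x = y) :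
    π = botS V := by
  apply Setoid.ext
  intro a b
  constructor
  · exact h a b
  · rintro rfl; exact π.refl a

instance (α : Type) [Finite α] : Finite (Setoid α) :=
  Finite.of_injective (fun s : Setoid α => s.r)
    (fun a b h => by
      apply Setoid.ext
      intro x y
      exact iff_of_eq (congrFun (congrFun h x) y))

end St4

open Classical

namespace St4

-- helpers on induced subgraphs
lemma induce_reach_mono {V : Type} {tr : SimpleGraph V} {A B : Set V} (h : A ⊆ B)
    {u v : V} (hu : u ∈ A) (hv : v ∈ A)
    (hr : (tr.induce A).Reachable ⟨u, hu⟩ ⟨v, hv⟩) :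
    (tr.induce B).Reachable ⟨u, h hu⟩ ⟨v, h hv⟩ := by
  let f : tr.induce A →g tr.induce B :=
    ⟨fun x => ⟨x.1, h x.2⟩, fun {a b} hab => hab⟩
  exact hr.map f

lemma induce_singleton_connected {V : Type} (tr : SimpleGraph V) (a : V) :
    (tr.induce {a}).Connected := by
  haveI : Nonempty ↥({a} : Set V) := ⟨⟨a, rfl⟩⟩
  constructor
  intro u v
  have hu : u = v := by
    apply Subtype.ext
    have h1 : u.1 ∈ ({a} : Set V) := u.2
    have h2 : v.1 ∈ ({a} : Set V) := v.2
    simp only [Set.mem_singleton_iff] at h1 h2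
    rw [h1, h2]
  rw [hu]

end St4

open Classical

namespace St4

lemma inc_nbhd (H : Hypergraph') (e : H.Edge) : H.inc.nbhd e = H.f e := rfl

lemma pad_mem_IGHW {k : ℕ} {G : Hypergraph'} (h : G.inc ∈ IGHW k) (p : G.Edge → ℕ) :
    (PadH G p).inc ∈ IGHW k := by
  obtain ⟨D, hD⟩ := h
  have hte : ∀ e : G.Edge, ∃ t, G.inc.nbhd e ⊆ D.Bag t ∧ e ∈ D.Cover t := D.complete
  choose te hte1 hte2 using hte
  refine ⟨⟨D.T, D.tr, D.isTree,
    fun t => (Sum.inl '' D.Bag t) ∪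
      (Sum.inr '' {x : Σ e' : G.Edge, Fin (p e') | te x.1 = t}),
    D.Cover, ?_, ?_, ?_⟩, ?_⟩
  · -- complete
    intro e
    refine ⟨te e, ?_, hte2 e⟩
    rintro w hw
    have hw' : w ∈ (PadH G p).f e := hw
    rcases hw' with ⟨v, hv, rfl⟩ | ⟨x, hx, rfl⟩
    · exact Or.inl ⟨v, hte1 e hv, rfl⟩
    · exact Or.inr ⟨x, by have hx' : x.1 = e := hx; show te x.1 = te e; rw [hx'], rfl⟩
  · -- connR
    rintro (v | x)
    · have hset : {t | Sum.inl v ∈ (Sum.inl '' D.Bag t) ∪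
          (Sum.inr '' {x : Σ e' : G.Edge, Fin (p e') | te x.1 = t})} = {t | v ∈ D.Bag t} := by
        ext t
        simp only [Set.mem_setOf_eq, Set.mem_union, Set.mem_image]
        constructor
        · rintro (⟨v', hv', hv''⟩ | ⟨x, _, hx'⟩)
          · cases hv''; exact hv'
          · cases hx'
        · intro hv; exact Or.inl ⟨v, hv, rfl⟩
      erw [hset]
      exact D.connR v
    · have hset : {t | Sum.inr x ∈ (Sum.inl '' D.Bag t) ∪
          (Sum.inr '' {x : Σ e' : G.Edge, Fin (p e') | te x.1 = t})} = {te x.1} := by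
        ext t
        simp only [Set.mem_setOf_eq, Set.mem_union, Set.mem_image, Set.mem_singleton_iff]
        constructor
        · rintro (⟨v', _, hv''⟩ | ⟨x', hx', hx''⟩)
          · cases hv''
          · cases hx''; exact hx'.symm
        · rintro rfl; exact Or.inr ⟨x, rfl, rfl⟩
      erw [hset]
      exact induce_singleton_connected _ _
  · -- covering
    intro t w hw
    rcases hw with ⟨v, hv, rfl⟩ | ⟨x, hx, rfl⟩
    · obtain ⟨e, he⟩ := Set.mem_iUnion₂.mp (D.covering t hv)
      obtain ⟨heCov, hve⟩ := he
      refine Set.mem_iUnion₂.mpr ⟨e, heCov, ?_⟩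
      exact Or.inl ⟨v, hve, rfl⟩
    · simp only [Set.mem_setOf_eq] at hx
      refine Set.mem_iUnion₂.mpr ⟨x.1, ?_, ?_⟩
      · rw [← hx]; exact hte2 x.1
      · exact Or.inr ⟨x, rfl, rfl⟩
  · exact hD

lemma quot_mem_IGHW {k : ℕ} {G : Hypergraph'} (h : G.inc ∈ IGHW k) {π : Setoid G.V}
    (hπ : EdgeGen G π) : (QuotH G π).inc ∈ IGHW k := by
  obtain ⟨D, hD⟩ := h
  have hte : ∀ e : G.Edge, ∃ t, G.inc.nbhd e ⊆ D.Bag t ∧ e ∈ D.Cover t := D.complete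
  choose te hte1 hte2 using hte
  refine ⟨⟨D.T, D.tr, D.isTree,
    fun t => Quotient.mk π '' D.Bag t, D.Cover, ?_, ?_, ?_⟩, ?_⟩
  · -- complete
    intro e
    refine ⟨te e, ?_, hte2 e⟩
    rintro w hw
    have hw' : w ∈ Quotient.mk π '' G.f e := hw
    obtain ⟨v, hv, rfl⟩ := hw'
    exact ⟨v, hte1 e hv, rfl⟩
  · -- connR
    intro q
    induction q using Quotient.ind with
    | _ x =>
    set A : Set D.T := {t | (Quotient.mk π x : Quotient π) ∈ Quotient.mk π '' D.Bag t} with hA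
    -- membership criteria
    have hmemA : ∀ (y : G.V) (t : D.T), π y x → y ∈ D.Bag t → t ∈ A := by
      intro y t hyx hyt
      exact ⟨y, hyt, (Quotient.sound hyx)⟩
    -- bag sets of y are connected and inside A
    have hBag : ∀ (y : G.V), π y x → ∀ (t₁ t₂ : D.T), y ∈ D.Bag t₁ → y ∈ D.Bag t₂ →
        ∀ (p₁ : t₁ ∈ A) (p₂ : t₂ ∈ A), (D.tr.induce A).Reachable ⟨t₁, p₁⟩ ⟨t₂, p₂⟩ := by
      intro y hyx t₁ t₂ h₁ h₂ p₁ p₂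
      have hconn := (D.connR y).preconnected ⟨t₁, h₁⟩ ⟨t₂, h₂⟩
      have hsub : {t | y ∈ D.Bag t} ⊆ A := fun t ht => hmemA y t hyx ht
      exact induce_reach_mono hsub h₁ h₂ hconn
    -- main claim by EqvGen induction
    have main : ∀ (y z : G.V), Relation.EqvGen (edgeRel G π) y z → π y x →
        ∀ (t₁ t₂ : D.T), y ∈ D.Bag t₁ → z ∈ D.Bag t₂ →
        ∀ (p₁ : t₁ ∈ A) (p₂ : t₂ ∈ A), (D.tr.induce A).Reachable ⟨t₁, p₁⟩ ⟨t₂, p₂⟩ := by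
      intro y z hyz
      induction hyz with
      | rel a b hab =>
        intro hax t₁ t₂ h₁ h₂ p₁ p₂
        obtain ⟨hπab, e, hae, hbe⟩ := hab
        have ha' : a ∈ D.Bag (te e) := hte1 e hae
        have hb' : b ∈ D.Bag (te e) := hte1 e hbe
        have hbx : π b x := π.trans (π.symm hπab) hax
        have pe : te e ∈ A := hmemA a (te e) hax ha'
        have r1 := hBag a hax t₁ (te e) h₁ ha' p₁ pe
        have r2 := hBag b hbx (te e) t₂ hb' h₂ pe p₂
        exact r1.trans r2
      | refl a =>
        intro hax t₁ t₂ h₁ h₂ p₁ p₂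
        exact hBag a hax t₁ t₂ h₁ h₂ p₁ p₂
      | symm a b hab ih =>
        intro hbx t₁ t₂ h₁ h₂ p₁ p₂
        have hax : π a x := π.trans (eqvGen_le hab) hbx
        exact (ih hax t₂ t₁ h₂ h₁ p₂ p₁).symm
      | trans a b c hab hbc ih1 ih2 =>
        intro hax t₁ t₂ h₁ h₂ p₁ p₂
        have hbx : π b x := π.trans (π.symm (eqvGen_le hab)) hax
        obtain ⟨e, hbe⟩ := G.covered b
        have hb' : b ∈ D.Bag (te e) := hte1 e hbe
        have pb : te e ∈ A := hmemA b (te e) hbx hb'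
        exact (ih1 hax t₁ (te e) h₁ hb' p₁ pb).trans (ih2 hbx (te e) t₂ hb' h₂ pb p₂)
    -- conclude Connected
    haveI : Nonempty ↥A := by
      obtain ⟨e, hxe⟩ := G.covered x
      exact ⟨⟨te e, hmemA x (te e) (π.refl x) (hte1 e hxe)⟩⟩
    refine @SimpleGraph.Connected.mk _ _ ?_ this
    rintro ⟨t₁, ht₁⟩ ⟨t₂, ht₂⟩
    obtain ⟨y₁, hy₁Bag, hy₁⟩ := id ht₁
    obtain ⟨y₂, hy₂Bag, hy₂⟩ := id ht₂
    have hy₁x : π y₁ x := Quotient.exact hy₁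
    have hy₂x : π y₂ x := Quotient.exact hy₂
    have h12 : π y₁ y₂ := π.trans hy₁x (π.symm hy₂x)
    exact main y₁ y₂ (hπ y₁ y₂ h12) hy₁x t₁ t₂ hy₁Bag hy₂Bag ht₁ ht₂
  · -- covering
    intro t w hw
    obtain ⟨v, hv, rfl⟩ := hw
    obtain ⟨e, he⟩ := Set.mem_iUnion₂.mp (D.covering t hv)
    obtain ⟨heCov, hve⟩ := he
    exact Set.mem_iUnion₂.mpr ⟨e, heCov, ⟨v, hve, rfl⟩⟩
  · exact hD

end St4

open Classical

namespace St4

/-- Sum over a finite type, with a canonical instance. -/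
def sSum {α : Type} [Finite α] (f : α → ℚ) : ℚ :=
  letI := Fintype.ofFinite α
  ∑ a, f a

/-- Product over a finite type, with a canonical instance. -/
def sProd {α : Type} [Finite α] (f : α → ℚ) : ℚ :=
  letI := Fintype.ofFinite α
  ∏ a, f a

lemma sSum_eq {α : Type} [inst : Fintype α] (f : α → ℚ) : sSum f = ∑ a, f a := by
  have h : Fintype.ofFinite α = inst := Subsingleton.elim _ _
  show (letI := Fintype.ofFinite α; ∑ a, f a) = _
  rw [h]

lemma sProd_eq {α : Type} [inst : Fintype α] (f : α → ℚ) : sProd f = ∏ a, f a := by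
  have h : Fintype.ofFinite α = inst := Subsingleton.elim _ _
  show (letI := Fintype.ofFinite α; ∏ a, f a) = _
  rw [h]

/-- hV is injective on every edge. -/
def EInj (G : Hypergraph') {X : Type} (hV : G.V → X) : Prop := ∀ e, Set.InjOn hV (G.f e)

/-- Master sum: weighted count of vertex maps. -/
def M (X : Type) [Finite X] (G : Hypergraph') (p : G.Edge → ℕ) (w : ℕ → Set X → ℚ) : ℚ :=
  sSum (fun hV : G.V → X => sProd (fun e : G.Edge => w (p e) (hV '' G.f e)))

/-- Master sum restricted to edge-injective vertex maps. -/
def Minj (X : Type) [Finite X] (G : Hypergraph') (p : G.Edge → ℕ) (w : ℕ → Set X → ℚ) : ℚ :=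
  sSum (fun hV : G.V → X =>
    if EInj G hV then sProd (fun e : G.Edge => w (p e) (hV '' G.f e)) else 0)

/-- weights -/
def wEq (H : Hypergraph') : ℕ → Set H.V → ℚ :=
  fun _ S => (Nat.card {m : H.Edge // H.f m = S} : ℚ)

def wSup (H : Hypergraph') : ℕ → Set H.V → ℚ :=
  fun _ S => (Nat.card {m : H.Edge // S ⊆ H.f m} : ℚ)

def wEqPad (H : Hypergraph') : ℕ → Set H.V → ℚ :=
  fun p S => (Nat.card {mg : H.Edge × (Fin p → H.V) // H.f mg.1 = S ∪ Set.range mg.2} : ℚ)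

def wSupPad (H : Hypergraph') : ℕ → Set H.V → ℚ :=
  fun p S => (Nat.card {mg : H.Edge × (Fin p → H.V) // S ∪ Set.range mg.2 ⊆ H.f mg.1} : ℚ)

lemma card_sigma_pi {α ι : Type} [Finite α] [Finite ι] (B : α → ι → Type)
    [hB : ∀ a i, Finite (B a i)] :
    (Nat.card ((a : α) × ((i : ι) → B a i)) : ℚ)
      = sSum (fun a => sProd (fun i => (Nat.card (B a i) : ℚ))) := by
  letI := Fintype.ofFinite α
  letI := Fintype.ofFinite ι
  letI : ∀ a i, Fintype (B a i) := fun a i => Fintype.ofFinite _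
  rw [sSum_eq]
  rw [Nat.card_eq_fintype_card, Fintype.card_sigma]
  push_cast
  apply Finset.sum_congr rfl
  intro a _
  rw [sProd_eq, Fintype.card_pi]
  push_cast
  apply Finset.prod_congr rfl
  intro i _
  rw [Nat.card_eq_fintype_card]

end St4

open Classical

namespace St4

lemma image_sigma_fiber {G : Hypergraph'} {β : Type} (p : G.Edge → ℕ) (e : G.Edge)
    (h₁ : (G.V ⊕ (Σ e' : G.Edge, Fin (p e'))) → β) :
    h₁ '' (Sum.inr '' {x : Σ e' : G.Edge, Fin (p e') | x.1 = e})
      = Set.range (fun i : Fin (p e) => h₁ (Sum.inr ⟨e, i⟩)) := by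
  ext y
  constructor
  · rintro ⟨-, ⟨⟨e', i⟩, hx, rfl⟩, rfl⟩
    have hx' : e' = e := hx
    subst hx'
    exact ⟨i, rfl⟩
  · rintro ⟨i, rfl⟩
    exact ⟨Sum.inr ⟨e, i⟩, ⟨⟨e, i⟩, rfl, rfl⟩, rfl⟩

lemma image_pad (G : Hypergraph') {β : Type} (p : G.Edge → ℕ) (e : G.Edge)
    (h₁ : (G.V ⊕ (Σ e' : G.Edge, Fin (p e'))) → β) :
    h₁ '' ((PadH G p).f e)
      = (fun v => h₁ (Sum.inl v)) '' G.f e ∪ Set.range (fun i : Fin (p e) => h₁ (Sum.inr ⟨e, i⟩)) := by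
  show h₁ '' ((Sum.inl '' G.f e) ∪ _) = _
  rw [Set.image_union, Set.image_image, image_sigma_fiber]

/-- Counting lemma: unpadded, strict homs. -/
lemma cntPhi0 (F H : Hypergraph') :
    (hhomCount F H : ℚ) = M H.V F (fun _ => 0) (wEq H) := by
  have E : HypHom F H ≃ Σ hV : F.V → H.V, (e : F.Edge) → {m : H.Edge // H.f m = hV '' F.f e} :=
    { toFun := fun h => ⟨h.1.1, fun e => ⟨h.1.2 e, h.2 e⟩⟩
      invFun := fun s => ⟨(s.1, fun e => (s.2 e).1), fun e => (s.2 e).2⟩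
      left_inv := fun h => rfl
      right_inv := fun s => rfl }
  show ((Nat.card (HypHom F H) : ℕ) : ℚ) = _
  rw [Nat.card_congr E, card_sigma_pi]
  rfl

/-- Counting lemma: unpadded, incidence homs. -/
lemma cntPsi0 (F H : Hypergraph') :
    (homCount F.inc H.inc : ℚ) = M H.V F (fun _ => 0) (wSup H) := by
  have E : IncHom F.inc H.inc ≃
      Σ hV : F.V → H.V, (e : F.Edge) → {m : H.Edge // hV '' F.f e ⊆ H.f m} :=
    { toFun := fun h => ⟨h.1.1, fun e => ⟨h.1.2 e, by rintro - ⟨v, hv, rfl⟩; exact h.2 e v hv⟩⟩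
      invFun := fun s => ⟨(s.1, fun e => (s.2 e).1), fun e v hv => (s.2 e).2 ⟨v, hv, rfl⟩⟩
      left_inv := fun h => rfl
      right_inv := fun s => rfl }
  show ((Nat.card (IncHom F.inc H.inc) : ℕ) : ℚ) = _
  rw [Nat.card_congr E, card_sigma_pi]
  rfl

/-- Counting lemma: padded, strict homs. -/
lemma cntPhiPad (G H : Hypergraph') (p : G.Edge → ℕ) :
    (hhomCount (PadH G p) H : ℚ) = M H.V G p (wEqPad H) := by
  have E : HypHom (PadH G p) H ≃
      Σ hV : G.V → H.V, (e : G.Edge) →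
        {mg : H.Edge × (Fin (p e) → H.V) // H.f mg.1 = hV '' G.f e ∪ Set.range mg.2} :=
    { toFun := fun h => ⟨fun v => h.1.1 (Sum.inl v), fun e =>
        ⟨(h.1.2 e, fun i => h.1.1 (Sum.inr ⟨e, i⟩)), by
          have := h.2 e
          rw [this]; erw [image_pad]⟩⟩
      invFun := fun s =>
        ⟨(Sum.elim s.1 (fun x => (s.2 x.1).1.2 x.2), fun e => (s.2 e).1.1), by
          intro e
          erw [image_pad]
          exact (s.2 e).2⟩
      left_inv := fun h => by
        apply Subtype.ext
        apply Prod.ext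
        · funext x
          cases x with
          | inl v => rfl
          | inr x => rfl
        · rfl
      right_inv := fun s => rfl }
  show ((Nat.card (HypHom (PadH G p) H) : ℕ) : ℚ) = _
  rw [Nat.card_congr E, card_sigma_pi]
  rfl

/-- Counting lemma: padded, incidence homs. -/
lemma cntPsiPad (G H : Hypergraph') (p : G.Edge → ℕ) :
    (homCount (PadH G p).inc H.inc : ℚ) = M H.V G p (wSupPad H) := by
  have E : IncHom (PadH G p).inc H.inc ≃
      Σ hV : G.V → H.V, (e : G.Edge) →
        {mg : H.Edge × (Fin (p e) → H.V) // hV '' G.f e ∪ Set.range mg.2 ⊆ H.f mg.1} :=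
    { toFun := fun h => ⟨fun v => h.1.1 (Sum.inl v), fun e =>
        ⟨(h.1.2 e, fun i => h.1.1 (Sum.inr ⟨e, i⟩)), by
          erw [← image_pad]
          rintro - ⟨v, hv, rfl⟩
          exact h.2 e v hv⟩⟩
      invFun := fun s =>
        ⟨(Sum.elim s.1 (fun x => (s.2 x.1).1.2 x.2), fun e => (s.2 e).1.1), by
          intro e v hv
          apply (s.2 e).2
          rcases hv with ⟨v₀, hv₀, rfl⟩ | ⟨⟨e', i⟩, hx, rfl⟩
          · exact Or.inl ⟨v₀, hv₀, rfl⟩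
          · have hx' : e' = e := hx
            subst hx'
            exact Or.inr ⟨i, rfl⟩⟩
      left_inv := fun h => by
        apply Subtype.ext
        apply Prod.ext
        · funext x
          cases x with
          | inl v => rfl
          | inr x => rfl
        · rfl
      right_inv := fun s => rfl }
  show ((Nat.card (IncHom (PadH G p).inc H.inc) : ℕ) : ℚ) = _
  rw [Nat.card_congr E, card_sigma_pi]
  rfl

end St4

open Classical

namespace St4

variable {X : Type} {G : Hypergraph'}

/-- factor map through the edge-generated closure of the kernel -/
def factorQ (hV : G.V → X) : Quotient (clS G (Setoid.ker hV)) → X :=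
  Quotient.lift hV (fun _ _ h => clS_le h)

lemma einj_factorQ (hV : G.V → X) :
    EInj (QuotH G (clS G (Setoid.ker hV))) (factorQ hV) := by
  intro e a ha b hb hab
  obtain ⟨x, hx, rfl⟩ := ha
  obtain ⟨y, hy, rfl⟩ := hb
  have hxy : hV x = hV y := hab
  exact Quotient.sound (Relation.EqvGen.rel x y ⟨hxy, e, hx, hy⟩)

lemma clS_ker_comp (π : Setoid G.V) (hπ : EdgeGen G π) (h' : Quotient π → X)
    (hinj : EInj (QuotH G π) h') :
    clS G (Setoid.ker (fun v => h' (Quotient.mk π v))) = π := by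
  apply Setoid.ext
  intro x y
  constructor
  · intro h
    have h2 : Relation.EqvGen (edgeRel G (Setoid.ker (fun v => h' (Quotient.mk π v)))) x y := h
    clear h
    induction h2 with
    | rel a b hab =>
      obtain ⟨hke, e, hae, hbe⟩ := hab
      have : (Quotient.mk π a : Quotient π) = Quotient.mk π b :=
        hinj e ⟨a, hae, rfl⟩ ⟨b, hbe, rfl⟩ hke
      exact Quotient.exact this
    | refl a => exact π.refl a
    | symm a b _ ih => exact π.symm ih
    | trans a b c _ _ ih1 ih2 => exact π.trans ih1 ih2
  · intro h
    have h2 := hπ x y h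
    have hmono : ∀ a b, edgeRel G π a b →
        edgeRel G (Setoid.ker (fun v => h' (Quotient.mk π v))) a b := by
      rintro a b ⟨hab, e, hae, hbe⟩
      exact ⟨congrArg h' (Quotient.sound hab), e, hae, hbe⟩
    exact Relation.EqvGen.mono hmono _ _ h2

lemma heq_quot_fun {V : Type} (σ τ : Setoid V) (h : σ = τ)
    (f : Quotient σ → X) (g : Quotient τ → X)
    (hfg : ∀ v, f (Quotient.mk σ v) = g (Quotient.mk τ v)) : HEq f g := by
  subst h
  exact heq_of_eq (funext fun q => Quotient.ind (motive := fun q => f q = g q) hfg q)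

/-- Grouping of vertex maps by the edge-generated closure of their kernel. -/
lemma grouping (X : Type) [Finite X] (G : Hypergraph') (p : G.Edge → ℕ) (w : ℕ → Set X → ℚ) :
    M X G p w = sSum (fun π : {π : Setoid G.V // EdgeGen G π} => Minj X (QuotH G π.1) p w) := by
  letI := Fintype.ofFinite X
  letI := Fintype.ofFinite G.V
  letI := Fintype.ofFinite G.Edge
  letI : Fintype {π : Setoid G.V // EdgeGen G π} := Fintype.ofFinite _
  letI : ∀ π : Setoid G.V, Fintype (Quotient π → X) := fun π => Fintype.ofFinite _
  letI : Fintype (G.V → X) := Fintype.ofFinite _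
  letI : ∀ π : Setoid G.V, Fintype ((QuotH G π).V → X) := fun π => Fintype.ofFinite _
  have hL : M X G p w = ∑ hV : G.V → X, sProd (fun e => w (p e) (hV '' G.f e)) := by
    simp only [M]; exact sSum_eq _
  have hR1 : ∀ π : {π : Setoid G.V // EdgeGen G π}, Minj X (QuotH G π.1) p w
      = ∑ h' : Quotient π.1 → X, (if EInj (QuotH G π.1) h'
          then sProd (fun e => w (p e) (h' '' (QuotH G π.1).f e)) else 0) := by
    intro π; simp only [Minj]; exact sSum_eq _
  have hR0 : sSum (fun π : {π : Setoid G.V // EdgeGen G π} => Minj X (QuotH G π.1) p w)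
      = ∑ π : {π : Setoid G.V // EdgeGen G π}, Minj X (QuotH G π.1) p w := sSum_eq _
  rw [hL, hR0, Finset.sum_congr rfl (fun π _ => hR1 π)]
  rw [Finset.sum_sigma']
  rw [← Finset.sum_filter]
  refine Finset.sum_nbij'
    (i := fun hV => (⟨⟨clS G (Setoid.ker hV), edgeGen_clS G _⟩, factorQ hV⟩ :
      Σ π : {π : Setoid G.V // EdgeGen G π}, (Quotient π.1 → X)))
    (j := fun s => s.2 ∘ Quotient.mk s.1.1) ?_ ?_ ?_ ?_ ?_
  · intro hV _
    rw [Finset.mem_filter]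
    exact ⟨Finset.mem_univ _, einj_factorQ hV⟩
  · intro s _
    exact Finset.mem_univ _
  · intro hV _
    funext v
    rfl
  · rintro ⟨⟨π, hπ⟩, h'⟩ hmem
    rw [Finset.mem_filter] at hmem
    have hinj : EInj (QuotH G π) h' := hmem.2
    have e1 : clS G (Setoid.ker (fun v => h' (Quotient.mk π v))) = π :=
      clS_ker_comp π hπ h' hinj
    refine Sigma.ext (Subtype.ext e1) ?_
    exact heq_quot_fun _ _ e1 _ _ (fun v => rfl)
  · intro hV _
    apply congrArg sProd
    funext e
    apply congrArg (w (p e))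
    show hV '' G.f e = factorQ hV '' (Quotient.mk _ '' G.f e)
    rw [Set.image_image]
    rfl

lemma minj_quot_discrete (X : Type) [Finite X] (G : Hypergraph') (π : Setoid G.V)
    (hdisc : ∀ x y, π x y → x = y) (p : G.Edge → ℕ) (w : ℕ → Set X → ℚ) :
    Minj X (QuotH G π) p w = Minj X G p w := by
  letI := Fintype.ofFinite X
  letI := Fintype.ofFinite G.V
  letI : Fintype (G.V → X) := Fintype.ofFinite _
  letI : Fintype ((QuotH G π).V → X) := Fintype.ofFinite _
  have hbij : Function.Bijective (Quotient.mk π) := by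
    constructor
    · intro a b h
      exact hdisc a b (Quotient.exact h)
    · intro q
      exact Quotient.ind (motive := fun q => ∃ a, Quotient.mk π a = q) (fun a => ⟨a, rfl⟩) q
  have hL : Minj X (QuotH G π) p w = ∑ h' : (QuotH G π).V → X,
      (if EInj (QuotH G π) h' then sProd (fun e => w (p e) (h' '' (QuotH G π).f e)) else 0) := by
    simp only [Minj]; exact sSum_eq _
  have hR : Minj X G p w = ∑ hV : G.V → X,
      (if EInj G hV then sProd (fun e => w (p e) (hV '' G.f e)) else 0) := by
    simp only [Minj]; exact sSum_eq _
  rw [hL, hR]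
  let eq0 : G.V ≃ Quotient π := Equiv.ofBijective (Quotient.mk π) hbij
  let e2 : ((QuotH G π).V → X) ≃ (G.V → X) :=
    { toFun := fun h' => fun v => h' (Quotient.mk π v)
      invFun := fun hV => fun q => hV (eq0.symm q)
      left_inv := fun h' => funext fun q => congrArg h' (eq0.apply_symm_apply q)
      right_inv := fun hV => funext fun v => congrArg hV (eq0.symm_apply_apply v) }
  apply Fintype.sum_equiv e2
  intro h'
  have himg : ∀ e, e2 h' '' G.f e = h' '' ((QuotH G π).f e) := by
    intro e
    show (fun v => h' (Quotient.mk π v)) '' G.f e = h' '' (Quotient.mk π '' G.f e)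
    erw [Set.image_image]
  have hiff : EInj (QuotH G π) h' ↔ EInj G (e2 h') := by
    constructor
    · intro hi e a ha b hb hab
      have : (Quotient.mk π a : Quotient π) = Quotient.mk π b :=
        hi e ⟨a, ha, rfl⟩ ⟨b, hb, rfl⟩ hab
      exact hdisc a b (Quotient.exact this)
    · intro hi e q hq q' hq' h
      obtain ⟨a, ha, rfl⟩ := hq
      obtain ⟨b, hb, rfl⟩ := hq'
      exact congrArg (Quotient.mk π) (hi e ha hb h)
  by_cases hc : EInj (QuotH G π) h'
  · rw [if_pos hc, if_pos (hiff.mp hc)]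
    apply congrArg sProd
    funext e
    rw [himg e]
  · rw [if_neg hc, if_neg (fun h => hc (hiff.mpr h))]

lemma card_quot_lt {V : Type} [Finite V] (π : Setoid V) (hne : π ≠ botS V) :
    Nat.card (Quotient π) < Nat.card V := by
  have hex : ¬ (∀ x y, π x y → x = y) := fun h => hne (eq_botS_of_discrete h)
  push_neg at hex
  obtain ⟨x, y, hπ, hxy⟩ := hex
  letI := Fintype.ofFinite V
  letI : Fintype (Quotient π) := Fintype.ofFinite _
  rw [Nat.card_eq_fintype_card, Nat.card_eq_fintype_card]
  apply Fintype.card_lt_of_surjective_not_injective (Quotient.mk π)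
  · intro q
    exact Quotient.ind (motive := fun q => ∃ a, Quotient.mk π a = q) (fun a => ⟨a, rfl⟩) q
  · intro hinj
    exact hxy (hinj (Quotient.sound hπ))

/-- Induction lemma: equality of M on a quotient-closed class implies equality of Minj. -/
lemma lemA {X X' : Type} [Finite X] [Finite X'] (C : Set Hypergraph')
    (hC : ∀ G ∈ C, ∀ π : Setoid G.V, EdgeGen G π → QuotH G π ∈ C)
    (w : ℕ → Set X → ℚ) (w' : ℕ → Set X' → ℚ)
    (hM : ∀ G ∈ C, ∀ p : G.Edge → ℕ, M X G p w = M X' G p w') :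
    ∀ (n : ℕ) (G : Hypergraph'), G ∈ C → Nat.card G.V < n →
      ∀ p : G.Edge → ℕ, Minj X G p w = Minj X' G p w' := by
  intro n
  induction n with
  | zero => intro G _ h; omega
  | succ n ih =>
    intro G hG hcard p
    letI : Fintype {π : Setoid G.V // EdgeGen G π} := Fintype.ofFinite _
    have hb : (⟨botS G.V, edgeGen_botS G⟩ : {π : Setoid G.V // EdgeGen G π}) ∈
        (Finset.univ : Finset {π : Setoid G.V // EdgeGen G π}) := Finset.mem_univ _
    have hg := grouping X G p w
    have hg' := grouping X' G p w'
    have hsplit : ∀ (Y : Type) (_ : Finite Y) (wy : ℕ → Set Y → ℚ),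
        sSum (fun π : {π : Setoid G.V // EdgeGen G π} => Minj Y (QuotH G π.1) p wy)
          = Minj Y (QuotH G (botS G.V)) p wy +
            ∑ π ∈ Finset.univ.erase (⟨botS G.V, edgeGen_botS G⟩ :
              {π : Setoid G.V // EdgeGen G π}), Minj Y (QuotH G π.1) p wy := by
      intro Y hY wy
      rw [sSum_eq]
      exact (Finset.add_sum_erase _ _ hb).symm
    rw [hsplit X _ w] at hg
    rw [hsplit X' _ w'] at hg'
    rw [minj_quot_discrete X G (botS G.V) (fun x y h => h) p w] at hg
    rw [minj_quot_discrete X' G (botS G.V) (fun x y h => h) p w'] at hg'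
    have hsum : ∑ π ∈ Finset.univ.erase (⟨botS G.V, edgeGen_botS G⟩ :
          {π : Setoid G.V // EdgeGen G π}), Minj X (QuotH G π.1) p w
        = ∑ π ∈ Finset.univ.erase (⟨botS G.V, edgeGen_botS G⟩ :
          {π : Setoid G.V // EdgeGen G π}), Minj X' (QuotH G π.1) p w' := by
      apply Finset.sum_congr rfl
      intro π hπmem
      have hne : π.1 ≠ botS G.V := by
        intro h
        exact (Finset.ne_of_mem_erase hπmem) (Subtype.ext h)
      have hlt : Nat.card (QuotH G π.1).V < n := by
        have h1 : Nat.card (Quotient π.1) < Nat.card G.V := card_quot_lt π.1 hne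
        have h0 : Nat.card (QuotH G π.1).V = Nat.card (Quotient π.1) := rfl
        omega
      exact ih (QuotH G π.1) (hC G hG π.1 π.2) hlt p
    have h1 : Minj X G p w = M X G p w - ∑ π ∈ Finset.univ.erase
        (⟨botS G.V, edgeGen_botS G⟩ : {π : Setoid G.V // EdgeGen G π}),
        Minj X (QuotH G π.1) p w := by linarith [hg]
    rw [h1, hsum, hM G hG p]
    linarith [hg']

end St4

open Classical Polynomial

namespace St4

/-! ### Interpolation -/

def interpPoly (σ N : ℕ) (r : ℕ → ℚ) : Polynomial ℚ :=
  Lagrange.interpolate (Finset.Icc σ N) (fun i : ℕ => (i : ℚ)) r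

lemma interp_inj (s : Finset ℕ) : Set.InjOn (fun i : ℕ => (i : ℚ)) s :=
  fun a _ b _ h => Nat.cast_injective h

lemma interp_natDegree_lt (σ N : ℕ) (r : ℕ → ℚ) : (interpPoly σ N r).natDegree < N + 1 := by
  by_cases hp : interpPoly σ N r = 0
  · rw [hp]; simp
  · rw [Polynomial.natDegree_lt_iff_degree_lt hp]
    have h1 := Lagrange.degree_interpolate_lt (s := Finset.Icc σ N)
      (v := fun i : ℕ => (i : ℚ)) r (interp_inj _)
    apply lt_of_lt_of_le h1
    have : (Finset.Icc σ N).card ≤ N + 1 := by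
      rw [Nat.card_Icc]
      omega
    exact_mod_cast Nat.cast_le.mpr this

lemma interp_eval (σ N : ℕ) (r : ℕ → ℚ) (a : ℕ) (h1 : σ ≤ a) (h2 : a ≤ N) :
    (interpPoly σ N r).eval (a : ℚ) = r a := by
  have ha : a ∈ Finset.Icc σ N := Finset.mem_Icc.mpr ⟨h1, h2⟩
  exact Lagrange.eval_interpolate_at_node r (interp_inj _) ha

lemma interp_sum_pow (σ N : ℕ) (r : ℕ → ℚ) (a : ℕ) (h1 : σ ≤ a) (h2 : a ≤ N) :
    ∑ p ∈ Finset.range (N + 1), (interpPoly σ N r).coeff p * (a : ℚ) ^ p = r a := by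
  rw [← Polynomial.eval_eq_sum_range' (interp_natDegree_lt σ N r), interp_eval σ N r a h1 h2]

/-! ### Weight evaluations -/

lemma wSupPad_eval (H : Hypergraph') (p : ℕ) (S : Set H.V) :
    wSupPad H p S =
      letI := Fintype.ofFinite {m : H.Edge // S ⊆ H.f m}
      ∑ m : {m : H.Edge // S ⊆ H.f m}, ((H.f m.1).ncard : ℚ) ^ p := by
  letI := Fintype.ofFinite {m : H.Edge // S ⊆ H.f m}
  letI := Fintype.ofFinite H.Edge
  letI := Fintype.ofFinite H.V
  letI : ∀ m : H.Edge, Fintype (H.f m) := fun m => Fintype.ofFinite _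
  have E : {mg : H.Edge × (Fin p → H.V) // S ∪ Set.range mg.2 ⊆ H.f mg.1} ≃
      Σ m : {m : H.Edge // S ⊆ H.f m}, (Fin p → ↥(H.f m.1)) :=
    { toFun := fun x => ⟨⟨x.1.1, fun v hv => x.2 (Or.inl hv)⟩,
        fun i => ⟨x.1.2 i, x.2 (Or.inr ⟨i, rfl⟩)⟩⟩
      invFun := fun s => ⟨(s.1.1, fun i => (s.2 i).1), by
        rintro v (hv | ⟨i, rfl⟩)
        · exact s.1.2 hv
        · exact (s.2 i).2⟩
      left_inv := fun x => rfl
      right_inv := fun s => rfl }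
  show ((Nat.card _ : ℕ) : ℚ) = _
  rw [Nat.card_congr E, Nat.card_eq_fintype_card, Fintype.card_sigma]
  push_cast
  apply Finset.sum_congr rfl
  intro m _
  rw [Fintype.card_fun, Fintype.card_fin]
  have : Fintype.card ↥(H.f m.1) = (H.f m.1).ncard := by
    rw [← Nat.card_eq_fintype_card, Nat.card_coe_set_eq]
  rw [this]
  push_cast
  rfl

lemma wEqPad_eval (H : Hypergraph') (p : ℕ) (S : Set H.V) :
    wEqPad H p S =
      letI := Fintype.ofFinite H.Edge
      ∑ m : H.Edge, (Nat.card {g : Fin p → H.V // H.f m = S ∪ Set.range g} : ℚ) := by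
  letI := Fintype.ofFinite H.Edge
  letI := Fintype.ofFinite H.V
  letI : ∀ m : H.Edge, Fintype {g : Fin p → H.V // H.f m = S ∪ Set.range g} :=
    fun m => Fintype.ofFinite _
  have E : {mg : H.Edge × (Fin p → H.V) // H.f mg.1 = S ∪ Set.range mg.2} ≃
      Σ m : H.Edge, {g : Fin p → H.V // H.f m = S ∪ Set.range g} :=
    { toFun := fun x => ⟨x.1.1, ⟨x.1.2, x.2⟩⟩
      invFun := fun s => ⟨(s.1, s.2.1), s.2.2⟩
      left_inv := fun x => rfl
      right_inv := fun s => rfl }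
  show ((Nat.card _ : ℕ) : ℚ) = _
  rw [Nat.card_congr E, Nat.card_eq_fintype_card, Fintype.card_sigma]
  push_cast
  apply Finset.sum_congr rfl
  intro m _
  rw [Nat.card_eq_fintype_card]

lemma wEq_char (H : Hypergraph') (S : Set H.V) :
    wEq H 0 S =
      letI := Fintype.ofFinite {m : H.Edge // S ⊆ H.f m}
      ∑ m : {m : H.Edge // S ⊆ H.f m}, (if (H.f m.1).ncard = S.ncard then (1 : ℚ) else 0) := by
  letI := Fintype.ofFinite {m : H.Edge // S ⊆ H.f m}
  have hiff : ∀ m : H.Edge, (H.f m = S) ↔ (S ⊆ H.f m ∧ (H.f m).ncard = S.ncard) := by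
    intro m
    constructor
    · rintro rfl; exact ⟨subset_rfl, rfl⟩
    · rintro ⟨h1, h2⟩
      exact (Set.eq_of_subset_of_ncard_le h1 (le_of_eq h2) (Set.toFinite _)).symm
  have E : {m : H.Edge // H.f m = S} ≃ {m : {m : H.Edge // S ⊆ H.f m} // (H.f m.1).ncard = S.ncard} :=
    { toFun := fun m => ⟨⟨m.1, ((hiff m.1).mp m.2).1⟩, ((hiff m.1).mp m.2).2⟩
      invFun := fun m => ⟨m.1.1, (hiff m.1.1).mpr ⟨m.1.2, m.2⟩⟩
      left_inv := fun m => rfl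
      right_inv := fun m => rfl }
  show ((Nat.card _ : ℕ) : ℚ) = _
  rw [Nat.card_congr E, Nat.card_eq_fintype_card]
  rw [Fintype.card_subtype, Finset.sum_boole]

lemma wSup_char (H : Hypergraph') (S : Set H.V) :
    wSup H 0 S =
      letI := Fintype.ofFinite H.Edge
      ∑ m : H.Edge, (if S ⊆ H.f m then (1 : ℚ) else 0) := by
  letI := Fintype.ofFinite H.Edge
  show ((Nat.card _ : ℕ) : ℚ) = _
  rw [Nat.card_eq_fintype_card, Fintype.card_subtype, Finset.sum_boole]

end St4

set_option linter.unusedVariables false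
open Classical Polynomial

namespace St4

/-- The interval `{B | S ⊆ B ⊆ A}` has `2 ^ (A \ S).ncard` elements. -/
lemma card_interval {V : Type} [Finite V] (S A : Set V) (hSA : S ⊆ A) :
    Nat.card {B : Set V // S ⊆ B ∧ B ⊆ A} = 2 ^ (A \ S).ncard := by
  letI := Fintype.ofFinite V
  have E : {B : Set V // S ⊆ B ∧ B ⊆ A} ≃ Set ↥(A \ S) :=
    { toFun := fun B => {x | x.1 ∈ B.1}
      invFun := fun T => ⟨S ∪ (Subtype.val '' T), by
        constructor
        · exact Set.subset_union_left
        · rintro v (hv | ⟨x, hx, rfl⟩)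
          · exact hSA hv
          · exact x.2.1⟩
      left_inv := fun B => by
        apply Subtype.ext
        ext v
        simp only [Set.mem_union, Set.mem_image, Set.mem_setOf_eq]
        constructor
        · rintro (hv | ⟨x, hx, rfl⟩)
          · exact B.2.1 hv
          · exact hx
        · intro hv
          by_cases hvS : v ∈ S
          · exact Or.inl hvS
          · exact Or.inr ⟨⟨v, B.2.2 hv, hvS⟩, hv, rfl⟩
      right_inv := fun T => by
        ext x
        simp only [Set.mem_union, Set.mem_image, Set.mem_setOf_eq]
        constructor
        · rintro (hx | ⟨y, hy, hyx⟩)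
          · exact absurd hx x.2.2
          · rwa [show y = x from Subtype.ext hyx] at hy
        · intro hx
          exact Or.inr ⟨x, hx, rfl⟩ }
  rw [Nat.card_congr E]
  letI := Fintype.ofFinite ↥(A \ S)
  rw [Nat.card_eq_fintype_card, Fintype.card_set]
  congr 1
  rw [← Nat.card_eq_fintype_card, Nat.card_coe_set_eq]

/-- Partitioning maps into `A` according to `S ∪ range`. -/
lemma pow_eq_sum_covers {V : Type} [Finite V] (S A : Set V) (hSA : S ⊆ A) (p : ℕ) :
    letI := Fintype.ofFinite (Set V)
    ((A.ncard : ℚ)) ^ p = ∑ B ∈ Finset.univ.filter (fun B : Set V => S ⊆ B ∧ B ⊆ A),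
      (Nat.card {g : Fin p → V // B = S ∪ Set.range g} : ℚ) := by
  letI := Fintype.ofFinite (Set V)
  letI := Fintype.ofFinite V
  letI : Fintype ↥A := Fintype.ofFinite _
  letI : ∀ B : Set V, Fintype {g : Fin p → V // B = S ∪ Set.range g} :=
    fun B => Fintype.ofFinite _
  -- count maps Fin p → A fiberwise by key
  have hcard : (Fintype.card (Fin p → ↥A) : ℚ) = (A.ncard : ℚ) ^ p := by
    rw [Fintype.card_fun, Fintype.card_fin]
    have : Fintype.card ↥A = A.ncard := by
      rw [← Nat.card_eq_fintype_card, Nat.card_coe_set_eq]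
    rw [this]
    push_cast
    rfl
  rw [← hcard]
  have hkey : ∀ g : Fin p → ↥A, (S ∪ Set.range (fun i => (g i).1) : Set V)
      ∈ Finset.univ.filter (fun B : Set V => S ⊆ B ∧ B ⊆ A) := by
    intro g
    rw [Finset.mem_filter]
    refine ⟨Finset.mem_univ _, Set.subset_union_left, ?_⟩
    rintro v (hv | ⟨i, rfl⟩)
    · exact hSA hv
    · exact (g i).2
  rw [show Fintype.card (Fin p → ↥A) = (Finset.univ : Finset (Fin p → ↥A)).card from rfl]
  rw [Finset.card_eq_sum_card_fiberwise (fun g _ => hkey g)]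
  push_cast
  apply Finset.sum_congr rfl
  intro B hB
  rw [Finset.mem_filter] at hB
  congr 1
  -- fiber ≃ subtype
  have E : {g : Fin p → ↥A // (S ∪ Set.range (fun i => (g i).1) : Set V) = B} ≃
      {g : Fin p → V // B = S ∪ Set.range g} :=
    { toFun := fun g => ⟨fun i => (g.1 i).1, g.2.symm⟩
      invFun := fun g => ⟨fun i => ⟨g.1 i, by
          have : (g.1 i : V) ∈ S ∪ Set.range g.1 := Or.inr ⟨i, rfl⟩
          rw [← g.2] at this
          exact hB.2.2 this⟩, g.2.symm⟩
      left_inv := fun g => rfl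
      right_inv := fun g => rfl }
  rw [Finset.card_filter]
  have : ∑ g : Fin p → ↥A, (if (S ∪ Set.range (fun i => (g i).1) : Set V) = B then 1 else 0)
      = (Finset.univ.filter (fun g : Fin p → ↥A =>
          (S ∪ Set.range (fun i => (g i).1) : Set V) = B)).card := by
    rw [Finset.sum_boole]
    norm_cast
  rw [this, ← Fintype.card_subtype, Fintype.card_congr E, Nat.card_eq_fintype_card]

/-- abbreviation for the λ-coefficients -/
def lamC (σ N : ℕ) : ℕ → ℚ := fun p => (interpPoly σ N (fun a => 2 ^ (a - σ))).coeff p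

def covSum (H : Hypergraph') (N : ℕ) (S A : Set H.V) : ℚ :=
  ∑ p ∈ Finset.range (N + 1),
    lamC S.ncard N p * (Nat.card {g : Fin p → H.V // A = S ∪ Set.range g} : ℚ)

lemma key_step (H : Hypergraph') (N : ℕ) (hN : Nat.card H.V ≤ N) (S : Set H.V)
    (A : Set H.V) (hSA : S ⊆ A)
    (IH : ∀ B : Set H.V, S ⊆ B → B ⊂ A → covSum H N S B = 1) :
    covSum H N S A = 1 := by
  letI := Fintype.ofFinite (Set H.V)
  letI := Fintype.ofFinite H.V
  have hσA : S.ncard ≤ A.ncard := Set.ncard_le_ncard hSA (Set.toFinite _)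
  have hAN : A.ncard ≤ N := by
    have h1 : A.ncard ≤ (Set.univ : Set H.V).ncard := Set.ncard_le_ncard (Set.subset_univ _) (Set.toFinite _)
    rw [Set.ncard_univ] at h1
    omega
  have h1 : ∑ p ∈ Finset.range (N + 1), lamC S.ncard N p * (A.ncard : ℚ) ^ p
      = 2 ^ (A.ncard - S.ncard) :=
    interp_sum_pow S.ncard N (fun a => 2 ^ (a - S.ncard)) A.ncard hσA hAN
  set t : Finset (Set H.V) := Finset.univ.filter (fun B : Set H.V => S ⊆ B ∧ B ⊆ A) with ht
  have hAt : A ∈ t := by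
    rw [ht, Finset.mem_filter]
    exact ⟨Finset.mem_univ _, hSA, subset_rfl⟩
  have h2 : ∑ B ∈ t, covSum H N S B
      = ∑ p ∈ Finset.range (N + 1), lamC S.ncard N p * (A.ncard : ℚ) ^ p := by
    unfold covSum
    rw [Finset.sum_comm]
    apply Finset.sum_congr rfl
    intro p _
    rw [← Finset.mul_sum, ← pow_eq_sum_covers S A hSA p]
  have hcardt : (t.card : ℚ) = 2 ^ (A.ncard - S.ncard) := by
    have hc1 : t.card = Nat.card {B : Set H.V // S ⊆ B ∧ B ⊆ A} := by
      rw [Nat.card_eq_fintype_card, Fintype.card_subtype]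
    rw [hc1, card_interval S A hSA, Set.ncard_diff hSA]
    push_cast
    rfl
  have hsplit : covSum H N S A + ∑ B ∈ t.erase A, covSum H N S B = ∑ B ∈ t, covSum H N S B :=
    Finset.add_sum_erase t _ hAt
  have herase : ∑ B ∈ t.erase A, covSum H N S B = (t.card : ℚ) - 1 := by
    have : ∀ B ∈ t.erase A, covSum H N S B = 1 := by
      intro B hB
      have hBA : B ∈ t := Finset.mem_of_mem_erase hB
      rw [ht, Finset.mem_filter] at hBA
      have hne : B ≠ A := Finset.ne_of_mem_erase hB
      exact IH B hBA.2.1 (ssubset_of_subset_of_ne hBA.2.2 hne)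
    rw [Finset.sum_congr rfl this, Finset.sum_const, Finset.card_erase_of_mem hAt]
    have hpos : 1 ≤ t.card := Finset.card_pos.mpr ⟨A, hAt⟩
    rw [nsmul_eq_mul, mul_one, Nat.cast_sub hpos]
    push_cast
    ring
  have := h1
  rw [← h2] at this
  rw [← hsplit, herase, hcardt] at this
  linarith

lemma key_cover (H : Hypergraph') (N : ℕ) (hN : Nat.card H.V ≤ N) (S : Set H.V) :
    ∀ (n : ℕ) (A : Set H.V), A.ncard ≤ n → S ⊆ A → covSum H N S A = 1 := by
  intro n
  induction n with
  | zero =>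
    intro A hA hSA
    apply key_step H N hN S A hSA
    intro B hSB hBA
    exfalso
    have hA0 : A = ∅ := by
      rw [← Set.ncard_eq_zero (Set.toFinite _)]
      omega
    rw [hA0] at hBA
    have hBempty : B = ∅ := Set.subset_empty_iff.mp hBA.subset
    exact hBA.ne (hBempty.trans rfl)
  | succ n ih =>
    intro A hA hSA
    apply key_step H N hN S A hSA
    intro B hSB hBA
    apply ih B _ hSB
    have := Set.ncard_lt_ncard hBA (Set.toFinite _)
    omega

end St4

set_option linter.unusedVariables false
open Classical Polynomial

namespace St4

def nuC (σ N : ℕ) : ℕ → ℚ := fun p => (interpPoly σ N (fun a => if a = σ then 1 else 0)).coeff p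

lemma identA (H : Hypergraph') (N : ℕ) (hN : Nat.card H.V ≤ N) (S : Set H.V) (hS : S.ncard ≤ N) :
    wEq H 0 S = ∑ p ∈ Finset.range (N + 1), nuC S.ncard N p * wSupPad H p S := by
  letI := Fintype.ofFinite {m : H.Edge // S ⊆ H.f m}
  letI := Fintype.ofFinite H.V
  have hbound : ∀ m : {m : H.Edge // S ⊆ H.f m},
      S.ncard ≤ (H.f m.1).ncard ∧ (H.f m.1).ncard ≤ N := by
    intro m
    constructor
    · exact Set.ncard_le_ncard m.2 (Set.toFinite _)
    · have h1 : (H.f m.1).ncard ≤ (Set.univ : Set H.V).ncard :=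
        Set.ncard_le_ncard (Set.subset_univ _) (Set.toFinite _)
      rw [Set.ncard_univ] at h1
      omega
  calc wEq H 0 S
      = ∑ m : {m : H.Edge // S ⊆ H.f m}, (if (H.f m.1).ncard = S.ncard then (1:ℚ) else 0) :=
        wEq_char H S
    _ = ∑ m : {m : H.Edge // S ⊆ H.f m}, ∑ p ∈ Finset.range (N + 1),
          nuC S.ncard N p * ((H.f m.1).ncard : ℚ) ^ p := by
        apply Finset.sum_congr rfl
        intro m _
        unfold nuC
        rw [interp_sum_pow S.ncard N (fun a => if a = S.ncard then 1 else 0)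
          (H.f m.1).ncard (hbound m).1 (hbound m).2]
    _ = ∑ p ∈ Finset.range (N + 1), ∑ m : {m : H.Edge // S ⊆ H.f m},
          nuC S.ncard N p * ((H.f m.1).ncard : ℚ) ^ p := Finset.sum_comm
    _ = ∑ p ∈ Finset.range (N + 1), nuC S.ncard N p * wSupPad H p S := by
        apply Finset.sum_congr rfl
        intro p _
        rw [wSupPad_eval H p S, ← Finset.mul_sum]

lemma identB (H : Hypergraph') (N : ℕ) (hN : Nat.card H.V ≤ N) (S : Set H.V) (hS : S.ncard ≤ N) :
    wSup H 0 S = ∑ p ∈ Finset.range (N + 1), lamC S.ncard N p * wEqPad H p S := by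
  letI := Fintype.ofFinite H.Edge
  letI := Fintype.ofFinite H.V
  calc wSup H 0 S
      = ∑ m : H.Edge, (if S ⊆ H.f m then (1:ℚ) else 0) := wSup_char H S
    _ = ∑ m : H.Edge, covSum H N S (H.f m) := by
        apply Finset.sum_congr rfl
        intro m _
        by_cases hm : S ⊆ H.f m
        · rw [if_pos hm, key_cover H N hN S (H.f m).ncard (H.f m) le_rfl hm]
        · rw [if_neg hm]
          unfold covSum
          apply Eq.symm
          apply Finset.sum_eq_zero
          intro p _
          have : IsEmpty {g : Fin p → H.V // H.f m = S ∪ Set.range g} := by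
            constructor
            rintro ⟨g, hg⟩
            exact hm (by rw [hg]; exact Set.subset_union_left)
          rw [Nat.card_of_isEmpty]
          ring
    _ = ∑ m : H.Edge, ∑ p ∈ Finset.range (N + 1),
          lamC S.ncard N p * (Nat.card {g : Fin p → H.V // H.f m = S ∪ Set.range g} : ℚ) := rfl
    _ = ∑ p ∈ Finset.range (N + 1), ∑ m : H.Edge,
          lamC S.ncard N p * (Nat.card {g : Fin p → H.V // H.f m = S ∪ Set.range g} : ℚ) :=
        Finset.sum_comm
    _ = ∑ p ∈ Finset.range (N + 1), lamC S.ncard N p * wEqPad H p S := by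
        apply Finset.sum_congr rfl
        intro p _
        rw [wEqPad_eval H p S, ← Finset.mul_sum]

end St4

set_option linter.unusedVariables false
open Classical Polynomial

namespace St4

lemma bridge_gen {X : Type} [Finite X] (G : Hypergraph') (N : ℕ) (hNX : Nat.card X ≤ N)
    (c : ℕ → ℕ → ℚ) (u : Set X → ℚ) (W : ℕ → Set X → ℚ)
    (hid : ∀ S : Set X, S.ncard ≤ N →
      u S = ∑ p ∈ Finset.range (N + 1), c S.ncard p * W p S) :
    Minj X G (fun _ => 0) (fun _ S => u S) =
      sSum (fun q : G.Edge → Fin (N + 1) =>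
        sProd (fun e : G.Edge => c (G.f e).ncard (q e).1) *
          Minj X G (fun e => (q e).1) W) := by
  letI := Fintype.ofFinite X
  letI := Fintype.ofFinite G.V
  letI := Fintype.ofFinite G.Edge
  letI : Fintype (G.V → X) := Fintype.ofFinite _
  have hexp : ∀ q : G.Edge → Fin (N + 1),
      sProd (fun e : G.Edge => c (G.f e).ncard (q e).1) * Minj X G (fun e => (q e).1) W
      = ∑ hV : G.V → X, (if EInj G hV
          then ∏ e, c (G.f e).ncard (q e).1 * W (q e).1 (hV '' G.f e) else 0) := by
    intro q
    simp only [Minj, sSum_eq, sProd_eq]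
    rw [Finset.mul_sum]
    apply Finset.sum_congr rfl
    intro hV _
    rw [mul_ite, mul_zero, ← Finset.prod_mul_distrib]
  have hR : sSum (fun q : G.Edge → Fin (N + 1) =>
      sProd (fun e : G.Edge => c (G.f e).ncard (q e).1) * Minj X G (fun e => (q e).1) W)
      = ∑ q : G.Edge → Fin (N + 1), sProd (fun e : G.Edge => c (G.f e).ncard (q e).1) *
          Minj X G (fun e => (q e).1) W := sSum_eq _
  rw [hR, Finset.sum_congr rfl (fun q _ => hexp q), Finset.sum_comm]
  have hL : Minj X G (fun _ => 0) (fun _ S => u S)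
      = ∑ hV : G.V → X, (if EInj G hV then ∏ e, u (hV '' G.f e) else 0) := by
    simp only [Minj, sSum_eq, sProd_eq]
  rw [hL]
  apply Finset.sum_congr rfl
  intro hV _
  by_cases hc : EInj G hV
  · simp only [if_pos hc]
    have hstep : ∀ e : G.Edge, u (hV '' G.f e)
        = ∑ j : Fin (N + 1), c (G.f e).ncard j.1 * W j.1 (hV '' G.f e) := by
      intro e
      have hb : (hV '' G.f e).ncard ≤ N := by
        have h1 : (hV '' G.f e).ncard ≤ (Set.univ : Set X).ncard :=
          Set.ncard_le_ncard (Set.subset_univ _) (Set.toFinite _)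
        rw [Set.ncard_univ] at h1
        omega
      rw [hid _ hb, Set.ncard_image_of_injOn (hc e)]
      exact Finset.sum_range _
    rw [Finset.prod_congr rfl (fun e _ => hstep e)]
    rw [Finset.prod_univ_sum]
    rw [Fintype.piFinset_univ]
  · simp only [if_neg hc]
    exact (Finset.sum_eq_zero (fun q _ => rfl)).symm

end St4

set_option linter.unusedVariables false
open Classical Polynomial

namespace St4

lemma hCquot (k : ℕ) : ∀ G ∈ GHWclass k, ∀ π : Setoid G.V, EdgeGen G π →
    QuotH G π ∈ GHWclass k := by
  intro G hG π hπ
  exact quot_mem_IGHW hG hπ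

lemma hCpad (k : ℕ) {G : Hypergraph'} (hG : G ∈ GHWclass k) (p : G.Edge → ℕ) :
    PadH G p ∈ GHWclass k :=
  pad_mem_IGHW hG p

/-- Direction ⇒ : key equality of edge-injective weak-hom counts. -/
lemma minj_wSup_eq (k N : ℕ) (H H' : Hypergraph')
    (hN1 : Nat.card H.V ≤ N) (hN2 : Nat.card H'.V ≤ N)
    (hyp : HypHomIndist (GHWclass k) H H') :
    ∀ G ∈ GHWclass k, Minj H.V G (fun _ => 0) (wSup H) = Minj H'.V G (fun _ => 0) (wSup H') := by
  have hA : ∀ G' ∈ GHWclass k, ∀ p : G'.Edge → ℕ,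
      Minj H.V G' p (wEqPad H) = Minj H'.V G' p (wEqPad H') := by
    intro G' hG' p
    refine lemA (GHWclass k) (hCquot k) (wEqPad H) (wEqPad H') ?_ (Nat.card G'.V + 1)
      G' hG' (Nat.lt_succ_self _) p
    intro G'' hG'' p'
    rw [← cntPhiPad, ← cntPhiPad]
    have := hyp (PadH G'' p') (hCpad k hG'' p')
    exact_mod_cast this
  intro G hG
  have hB1 : ∀ S : Set H.V, S.ncard ≤ N →
      wSup H 0 S = ∑ p ∈ Finset.range (N + 1), lamC S.ncard N p * wEqPad H p S :=
    fun S hS => identB H N hN1 S hS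
  have hB2 : ∀ S : Set H'.V, S.ncard ≤ N →
      wSup H' 0 S = ∑ p ∈ Finset.range (N + 1), lamC S.ncard N p * wEqPad H' p S :=
    fun S hS => identB H' N hN2 S hS
  have e1 : Minj H.V G (fun _ => 0) (wSup H)
      = Minj H.V G (fun _ => 0) (fun _ S => wSup H 0 S) := rfl
  have e2 : Minj H'.V G (fun _ => 0) (wSup H')
      = Minj H'.V G (fun _ => 0) (fun _ S => wSup H' 0 S) := rfl
  rw [e1, e2,
    bridge_gen G N hN1 (fun σ p => lamC σ N p) (fun S => wSup H 0 S) (wEqPad H) hB1,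
    bridge_gen G N hN2 (fun σ p => lamC σ N p) (fun S => wSup H' 0 S) (wEqPad H') hB2]
  apply congrArg sSum
  funext q
  rw [hA G hG (fun e => (q e).1)]

/-- Direction ⇐ : key equality of edge-injective strict-hom counts. -/
lemma minj_wEq_eq (k N : ℕ) (H H' : Hypergraph')
    (hN1 : Nat.card H.V ≤ N) (hN2 : Nat.card H'.V ≤ N)
    (hyp : HomIndist (IGHW k) H.inc H'.inc) :
    ∀ G ∈ GHWclass k, Minj H.V G (fun _ => 0) (wEq H) = Minj H'.V G (fun _ => 0) (wEq H') := by
  have hA : ∀ G' ∈ GHWclass k, ∀ p : G'.Edge → ℕ,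
      Minj H.V G' p (wSupPad H) = Minj H'.V G' p (wSupPad H') := by
    intro G' hG' p
    refine lemA (GHWclass k) (hCquot k) (wSupPad H) (wSupPad H') ?_ (Nat.card G'.V + 1)
      G' hG' (Nat.lt_succ_self _) p
    intro G'' hG'' p'
    rw [← cntPsiPad, ← cntPsiPad]
    have := hyp (PadH G'' p').inc (hCpad k hG'' p')
    exact_mod_cast this
  intro G hG
  have hB1 : ∀ S : Set H.V, S.ncard ≤ N →
      wEq H 0 S = ∑ p ∈ Finset.range (N + 1), nuC S.ncard N p * wSupPad H p S :=
    fun S hS => identA H N hN1 S hS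
  have hB2 : ∀ S : Set H'.V, S.ncard ≤ N →
      wEq H' 0 S = ∑ p ∈ Finset.range (N + 1), nuC S.ncard N p * wSupPad H' p S :=
    fun S hS => identA H' N hN2 S hS
  have e1 : Minj H.V G (fun _ => 0) (wEq H)
      = Minj H.V G (fun _ => 0) (fun _ S => wEq H 0 S) := rfl
  have e2 : Minj H'.V G (fun _ => 0) (wEq H')
      = Minj H'.V G (fun _ => 0) (fun _ S => wEq H' 0 S) := rfl
  rw [e1, e2,
    bridge_gen G N hN1 (fun σ p => nuC σ N p) (fun S => wEq H 0 S) (wSupPad H) hB1,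
    bridge_gen G N hN2 (fun σ p => nuC σ N p) (fun S => wEq H' 0 S) (wSupPad H') hB2]
  apply congrArg sSum
  funext q
  rw [hA G hG (fun e => (q e).1)]

end St4

open St4

/-- For `k ≥ 1` and hypergraphs `H, H'`: `H` and `H'` are
homomorphism indistinguishable over `GHW_k` iff their incidence graphs are
homomorphism indistinguishable over `IGHW_k`. -/
theorem homIndist_GHW_iff_IGHW (k : ℕ) (hk : 1 ≤ k) (H H' : Hypergraph') :
    HypHomIndist (GHWclass k) H H' ↔ HomIndist (IGHW k) H.inc H'.inc := by
  set N := max (Nat.card H.V) (Nat.card H'.V) with hN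
  have hN1 : Nat.card H.V ≤ N := le_max_left _ _
  have hN2 : Nat.card H'.V ≤ N := le_max_right _ _
  constructor
  · intro hyp J hJ
    have hF : HofI J ∈ GHWclass k := by
      show (HofI J).inc ∈ IGHW k
      rw [HofI_inc]
      exact hJ
    have key : (homCount J H.inc : ℚ) = (homCount J H'.inc : ℚ) := by
      rw [← HofI_inc J]
      rw [cntPsi0 (HofI J) H, cntPsi0 (HofI J) H']
      rw [grouping H.V (HofI J) (fun _ => 0) (wSup H),
        grouping H'.V (HofI J) (fun _ => 0) (wSup H')]
      apply congrArg sSum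
      funext π
      exact minj_wSup_eq k N H H' hN1 hN2 hyp (QuotH (HofI J) π.1)
        (hCquot k (HofI J) hF π.1 π.2)
    exact_mod_cast key
  · intro hyp F hF
    have key : (hhomCount F H : ℚ) = (hhomCount F H' : ℚ) := by
      rw [cntPhi0 F H, cntPhi0 F H']
      rw [grouping H.V F (fun _ => 0) (wEq H), grouping H'.V F (fun _ => 0) (wEq H')]
      apply congrArg sSum
      funext π
      exact minj_wEq_eq k N H H' hN1 hN2 hyp (QuotH F π.1)
        (hCquot k F hF π.1 π.2)
    exact_mod_cast key

end Statement4Proof
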